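/- arXiv:1810.03168 — 4 statements merged into one kernel-verified Lean document; each statement's English description precedes it below -/
import Mathlib

section
/- Let g be a Lie algebra with a vector space decomposition g = g₊ ⊕ g₋ into two Lie subalgebras, and let R = P₊ − P₋ where P₊ and P₋ are the projections onto g₊ and g₋. Then the bracket [X,Y]_R := (1/2)([RX,Y] + [X,RY]) equals [X₊,Y₊] − [X₋,Y₋] (where X± = P±X) and satisfies the Jacobi identity, so it defines a Lie algebra structure on the underlying vector space of g. -/
/-!
Writing `X = X₊ + X₋`, the cross terms of `[RX, Y] + [X, RY]` cancel, leaving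
`2([X₊, Y₊] - [X₋, Y₋])`. Since `g₊` and `g₋` are subalgebras, the `g₊`- and `g₋`-components of
`[Y, Z]_R` are `[Y₊, Z₊]` and `-[Y₋, Z₋]`, so `[X, [Y, Z]_R]_R = [X₊, [Y₊, Z₊]] + [X₋, [Y₋, Z₋]]`
and the Jacobi identity for `[·, ·]_R` is the sum of those of `g₊` and `g₋`.
-/

section RBracket

variable {R L : Type*} [CommRing R] [LieRing L] [LieAlgebra R L] (Pp Pm : L →ₗ[R] L)

def rBracket (X Y : L) : L := ⁅Pp X, Pp Y⁆ - ⁅Pm X, Pm Y⁆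

theorem two_smul_rBracket (hsum : Pp + Pm = LinearMap.id) (X Y : L) :
    (2 : R) • rBracket Pp Pm X Y = ⁅(Pp - Pm) X, Y⁆ + ⁅X, (Pp - Pm) Y⁆ := by
  have hdecomp : ∀ x : L, Pp x + Pm x = x := fun x => LinearMap.congr_fun hsum x
  calc (2 : R) • rBracket Pp Pm X Y
      = ⁅Pp X - Pm X, Pp Y + Pm Y⁆ + ⁅Pp X + Pm X, Pp Y - Pm Y⁆ := by
        simp only [rBracket, sub_lie, lie_sub, add_lie, lie_add, two_smul]
        abel
    _ = ⁅(Pp - Pm) X, Y⁆ + ⁅X, (Pp - Pm) Y⁆ := by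
        rw [hdecomp, hdecomp, LinearMap.sub_apply, LinearMap.sub_apply]

theorem rBracket_swap (X Y : L) : rBracket Pp Pm X Y = -rBracket Pp Pm Y X := by
  rw [rBracket, rBracket, ← lie_skew (Pp X), ← lie_skew (Pm X), neg_sub_neg, neg_sub]

theorem rBracket_swap_projections (X Y : L) : rBracket Pm Pp X Y = -rBracket Pp Pm X Y :=
  (neg_sub _ _).symm

variable {Pp Pm}

theorem apply_rBracket (hPp : IsIdempotentElem Pp) (hPpPm : Pp ∘ₗ Pm = 0)
    (hsubp : ∀ x y : L, ⁅Pp x, Pp y⁆ ∈ LinearMap.range Pp)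
    (hsubm : ∀ x y : L, ⁅Pm x, Pm y⁆ ∈ LinearMap.range Pm) (X Y : L) :
    Pp (rBracket Pp Pm X Y) = ⁅Pp X, Pp Y⁆ := by
  have hfix : Pp ⁅Pp X, Pp Y⁆ = ⁅Pp X, Pp Y⁆ :=
    (LinearMap.IsIdempotentElem.mem_range_iff hPp).mp (hsubp X Y)
  have hkill : Pp ⁅Pm X, Pm Y⁆ = 0 := LinearMap.range_le_ker_iff.mpr hPpPm (hsubm X Y)
  rw [rBracket, map_sub, hfix, hkill, sub_zero]

theorem rBracket_rBracket (hPp : IsIdempotentElem Pp) (hPm : IsIdempotentElem Pm)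
    (hPpPm : Pp ∘ₗ Pm = 0) (hPmPp : Pm ∘ₗ Pp = 0)
    (hsubp : ∀ x y : L, ⁅Pp x, Pp y⁆ ∈ LinearMap.range Pp)
    (hsubm : ∀ x y : L, ⁅Pm x, Pm y⁆ ∈ LinearMap.range Pm) (X Y Z : L) :
    rBracket Pp Pm X (rBracket Pp Pm Y Z) = ⁅Pp X, ⁅Pp Y, Pp Z⁆⁆ + ⁅Pm X, ⁅Pm Y, Pm Z⁆⁆ := by
  have hp := apply_rBracket hPp hPpPm hsubp hsubm Y Z
  have hm := apply_rBracket hPm hPmPp hsubm hsubp Y Z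
  rw [rBracket_swap_projections, map_neg, neg_eq_iff_eq_neg] at hm
  rw [rBracket, hp, hm, lie_neg, sub_neg_eq_add]

theorem rBracket_jacobi (hPp : IsIdempotentElem Pp) (hPm : IsIdempotentElem Pm)
    (hPpPm : Pp ∘ₗ Pm = 0) (hPmPp : Pm ∘ₗ Pp = 0)
    (hsubp : ∀ x y : L, ⁅Pp x, Pp y⁆ ∈ LinearMap.range Pp)
    (hsubm : ∀ x y : L, ⁅Pm x, Pm y⁆ ∈ LinearMap.range Pm) (X Y Z : L) :
    rBracket Pp Pm X (rBracket Pp Pm Y Z) + rBracket Pp Pm Y (rBracket Pp Pm Z X)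
      + rBracket Pp Pm Z (rBracket Pp Pm X Y) = 0 := by
  simp only [rBracket_rBracket hPp hPm hPpPm hPmPp hsubp hsubm]
  calc _ = (⁅Pp X, ⁅Pp Y, Pp Z⁆⁆ + ⁅Pp Y, ⁅Pp Z, Pp X⁆⁆ + ⁅Pp Z, ⁅Pp X, Pp Y⁆⁆)
        + (⁅Pm X, ⁅Pm Y, Pm Z⁆⁆ + ⁅Pm Y, ⁅Pm Z, Pm X⁆⁆ + ⁅Pm Z, ⁅Pm X, Pm Y⁆⁆) := by abel
    _ = 0 := by rw [lie_jacobi, lie_jacobi, add_zero]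

end RBracket

/-- If `g = g₊ ⊕ g₋` (vector space direct sum) with `g₊ = range P₊`,
`g₋ = range P₋` Lie subalgebras and `R = P₊ - P₋`, then the bracket
`[X,Y]_R := (1/2)([RX,Y] + [X,RY])` equals `[X₊,Y₊] - [X₋,Y₋]` and satisfies
antisymmetry and the Jacobi identity, hence defines a Lie algebra structure. -/
theorem aks_R_bracket {K : Type*} [Field K] [CharZero K]
    {g : Type*} [LieRing g] [LieAlgebra K g]
    (Pp Pm : g →ₗ[K] g)
    (hsum : Pp + Pm = LinearMap.id)
    (hPp : Pp ∘ₗ Pp = Pp) (hPm : Pm ∘ₗ Pm = Pm)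
    (hPpPm : Pp ∘ₗ Pm = 0) (hPmPp : Pm ∘ₗ Pp = 0)
    (hsubp : ∀ x y : g, ⁅Pp x, Pp y⁆ ∈ LinearMap.range Pp)
    (hsubm : ∀ x y : g, ⁅Pm x, Pm y⁆ ∈ LinearMap.range Pm) :
    (∀ X Y : g, ((2 : K)⁻¹) • (⁅(Pp - Pm) X, Y⁆ + ⁅X, (Pp - Pm) Y⁆)
        = ⁅Pp X, Pp Y⁆ - ⁅Pm X, Pm Y⁆) ∧
    (∀ X Y : g, (⁅Pp X, Pp Y⁆ - ⁅Pm X, Pm Y⁆)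
        = -(⁅Pp Y, Pp X⁆ - ⁅Pm Y, Pm X⁆)) ∧
    (∀ X Y Z : g,
      (fun A B : g => ⁅Pp A, Pp B⁆ - ⁅Pm A, Pm B⁆) X
          ((fun A B : g => ⁅Pp A, Pp B⁆ - ⁅Pm A, Pm B⁆) Y Z)
      + (fun A B : g => ⁅Pp A, Pp B⁆ - ⁅Pm A, Pm B⁆) Y
          ((fun A B : g => ⁅Pp A, Pp B⁆ - ⁅Pm A, Pm B⁆) Z X)
      + (fun A B : g => ⁅Pp A, Pp B⁆ - ⁅Pm A, Pm B⁆) Z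
          ((fun A B : g => ⁅Pp A, Pp B⁆ - ⁅Pm A, Pm B⁆) X Y) = 0) := by
  refine ⟨fun X Y => ?_, rBracket_swap Pp Pm, rBracket_jacobi hPp hPm hPpPm hPmPp hsubp hsubm⟩
  rw [← two_smul_rBracket Pp Pm hsum, inv_smul_smul₀ two_ne_zero]
  rfl
end

section
/- Let g be a Lie algebra and R : g → g a linear map satisfying the modified Yang–Baxter equation [RX,RY] − R([RX,Y] + [X,RY]) = −[X,Y] for all X,Y ∈ g. Then g₊ := {X + RX : X ∈ g} and g₋ := {X − RX : X ∈ g} are Lie subalgebras of g. -/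
/-- If a linear map `R : g → g` satisfies the modified Yang–Baxter
equation `[RX,RY] − R([RX,Y] + [X,RY]) = −[X,Y]`, then
`g₊ = {X + RX}` and `g₋ = {X − RX}` are Lie subalgebras of `g`. -/
theorem mYB_subalgebras {K : Type*} [Field K] [CharZero K]
    {g : Type*} [LieRing g] [LieAlgebra K g]
    (R : g →ₗ[K] g)
    (hmYB : ∀ X Y : g, ⁅R X, R Y⁆ - R (⁅R X, Y⁆ + ⁅X, R Y⁆) = -⁅X, Y⁆) :
    (∀ X Y : g, ∃ Z : g, ⁅X + R X, Y + R Y⁆ = Z + R Z) ∧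
    (∀ X Y : g, ∃ Z : g, ⁅X - R X, Y - R Y⁆ = Z - R Z) := by
  constructor
  · intro X Y
    refine ⟨⁅R X, Y⁆ + ⁅X, R Y⁆, ?_⟩
    have h := hmYB X Y
    have hR : ⁅R X, R Y⁆ = -⁅X, Y⁆ + R (⁅R X, Y⁆ + ⁅X, R Y⁆) :=
      sub_eq_iff_eq_add.mp h
    simp only [add_lie, lie_add, hR]
    abel
  · intro X Y
    refine ⟨-(⁅R X, Y⁆ + ⁅X, R Y⁆), ?_⟩
    have h := hmYB X Y
    have hR : ⁅R X, R Y⁆ = -⁅X, Y⁆ + R (⁅R X, Y⁆ + ⁅X, R Y⁆) :=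
      sub_eq_iff_eq_add.mp h
    simp only [sub_lie, lie_sub, hR, map_neg]
    abel
end

section
/- Let g be a finite-dimensional Lie algebra with nondegenerate Ad-invariant symmetric bilinear form, g = g₊ ⊕ g₋ a splitting into Lie subalgebras with R = P₊ − P₋, and let F, H : g → ℝ be Ad-invariant functions (i.e. [∇F(X),X] = 0 = [∇H(X),X] for all X). Then the R-bracket {F,H}_R(X) := ⟨X, [∇F(X)₊, ∇H(X)₊] − [∇F(X)₋, ∇H(X)₋]⟩ vanishes for all X ∈ g. -/
/-!
Write `β(u, v) = ⟨X, [u, v]⟩`, `a = ∇F(X)`, `b = ∇H(X)`. Invariance of the form moves the bracket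
onto `X`: `β(a, v) = ⟨[X, a], v⟩` and `β(u, b) = -⟨[X, b], u⟩`, so Ad-invariance of `F` and `H`
makes `a` a left and `b` a right null vector of `β`. Since `a₊ = a - a₋` and `b₊ = b - b₋`,
bilinearity gives `β(a₊, b₊) = β(a₋, b₋)`.
-/

section InvariantForm

variable {R L : Type*} [CommRing R] [LieRing L] [LieAlgebra R L] {B : LinearMap.BilinForm R L}

theorem bilin_lie_left_eq_zero_of_lie_eq_zero (hinv : ∀ X Y Z : L, B ⁅X, Y⁆ Z = B X ⁅Y, Z⁆)
    {X a : L} (ha : ⁅a, X⁆ = 0) (v : L) : B X ⁅a, v⁆ = 0 := by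
  rw [← hinv, ← lie_skew, ha, neg_zero, map_zero, LinearMap.zero_apply]

theorem bilin_lie_right_eq_zero_of_lie_eq_zero (hinv : ∀ X Y Z : L, B ⁅X, Y⁆ Z = B X ⁅Y, Z⁆)
    {X b : L} (hb : ⁅b, X⁆ = 0) (u : L) : B X ⁅u, b⁆ = 0 := by
  rw [← lie_skew, map_neg, bilin_lie_left_eq_zero_of_lie_eq_zero hinv hb, neg_zero]

theorem bilin_lie_sub_sub_eq (hinv : ∀ X Y Z : L, B ⁅X, Y⁆ Z = B X ⁅Y, Z⁆)
    {X a b : L} (ha : ⁅a, X⁆ = 0) (hb : ⁅b, X⁆ = 0) (a' b' : L) :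
    B X ⁅a - a', b - b'⁆ = B X ⁅a', b'⁆ := by
  simp only [lie_sub, sub_lie, map_sub, bilin_lie_left_eq_zero_of_lie_eq_zero hinv ha,
    bilin_lie_right_eq_zero_of_lie_eq_zero hinv hb, sub_zero, zero_sub, neg_neg]

end InvariantForm

theorem R_bracket_of_invariants_vanishes_general
    {g : Type*}
    [LieRing g] [LieAlgebra ℝ g]
    (B : LinearMap.BilinForm ℝ g)
    (hinv : ∀ X Y Z : g, B ⁅X, Y⁆ Z = B X ⁅Y, Z⁆)
    (Pp Pm : g →ₗ[ℝ] g)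
    (hsum : Pp + Pm = LinearMap.id)
    (gradF gradH : g → g)
    (hFadinv : ∀ X : g, ⁅gradF X, X⁆ = 0)
    (hHadinv : ∀ X : g, ⁅gradH X, X⁆ = 0) :
    ∀ X : g, B X (⁅Pp (gradF X), Pp (gradH X)⁆ - ⁅Pm (gradF X), Pm (gradH X)⁆) = 0 := by
  intro X
  have hPp : ∀ v, Pp v = v - Pm v := fun v => eq_sub_of_add_eq (LinearMap.congr_fun hsum v)
  rw [map_sub, hPp, hPp, bilin_lie_sub_sub_eq hinv (hFadinv X) (hHadinv X), sub_self]

/-- With a splitting `g = g₊ ⊕ g₋` into Lie subalgebras and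
`R = P₊ − P₋`, the R-bracket
`{F,H}_R(X) = ⟨X, [∇F(X)₊, ∇H(X)₊] − [∇F(X)₋, ∇H(X)₋]⟩`
of two Ad-invariant functions vanishes for all `X`. -/
theorem R_bracket_of_invariants_vanishes
    {g : Type*} [NormedAddCommGroup g] [NormedSpace ℝ g]
    [LieRing g] [LieAlgebra ℝ g] [FiniteDimensional ℝ g]
    (B : LinearMap.BilinForm ℝ g)
    (hnd : B.Nondegenerate)
    (hsymm : ∀ X Y : g, B X Y = B Y X)
    (hinv : ∀ X Y Z : g, B ⁅X, Y⁆ Z = B X ⁅Y, Z⁆)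
    (Pp Pm : g →ₗ[ℝ] g)
    (hsum : Pp + Pm = LinearMap.id)
    (hPp : Pp ∘ₗ Pp = Pp) (hPm : Pm ∘ₗ Pm = Pm)
    (hPpPm : Pp ∘ₗ Pm = 0) (hPmPp : Pm ∘ₗ Pp = 0)
    (hsubp : ∀ x y : g, ⁅Pp x, Pp y⁆ ∈ LinearMap.range Pp)
    (hsubm : ∀ x y : g, ⁅Pm x, Pm y⁆ ∈ LinearMap.range Pm)
    (F H : g → ℝ) (gradF gradH : g → g)
    (hFdiff : Differentiable ℝ F) (hHdiff : Differentiable ℝ H)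
    (hgradF : ∀ X v : g, fderiv ℝ F X v = B (gradF X) v)
    (hgradH : ∀ X v : g, fderiv ℝ H X v = B (gradH X) v)
    (hFadinv : ∀ X : g, ⁅gradF X, X⁆ = 0)
    (hHadinv : ∀ X : g, ⁅gradH X, X⁆ = 0) :
    ∀ X : g, B X (⁅Pp (gradF X), Pp (gradH X)⁆ - ⁅Pm (gradF X), Pm (gradH X)⁆) = 0 :=
  R_bracket_of_invariants_vanishes_general B hinv Pp Pm hsum gradF gradH hFadinv hHadinv
end

section
/- The four differential operators 𝒜₁ = (1/(c²−1))(∂_a + c ∂_b), ℬ₁ = (1/(1−c²))(c ∂_a + ∂_b), 𝒜₂ = a ∂_a − c ∂_c, ℬ₂ = b ∂_b − c ∂_c, acting on smooth functions of (a, b, c) with c² ≠ 1, satisfy the commutation relations [𝒜₁,ℬ₁] = 0, [𝒜₁,𝒜₂] = ((1+c²)/(1−c²)) 𝒜₁, [𝒜₂,ℬ₁] = (2c/(1−c²)) 𝒜₁, [𝒜₂,ℬ₂] = 0, [𝒜₁,ℬ₂] = (−2c/(1−c²)) ℬ₁, [ℬ₁,ℬ₂] = ((1+c²)/(1−c²))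 ℬ₁. -/
open scoped ContDiff

lemma coe_le_infty (n : ℕ) : (n : WithTop ℕ∞) ≤ ∞ := by
  rw [show ((n:WithTop ℕ∞)) = ((n:ℕ∞) : WithTop ℕ∞) by norm_cast]
  exact WithTop.coe_le_coe.2 le_top

/-- Directional derivative of a function on `ℝ × ℝ × ℝ`. -/
noncomputable def pdv (v : ℝ × ℝ × ℝ) (H : ℝ × ℝ × ℝ → ℝ) : ℝ × ℝ × ℝ → ℝ :=
  fun p => fderiv ℝ H p v

local notation "D1" => pdv ((1:ℝ),(0:ℝ),(0:ℝ))
local notation "D2" => pdv ((0:ℝ),(1:ℝ),(0:ℝ))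
local notation "D3" => pdv ((0:ℝ),(0:ℝ),(1:ℝ))

lemma contDiff_pdv (v : ℝ × ℝ × ℝ) {H : ℝ × ℝ × ℝ → ℝ} (hH : ContDiff ℝ ∞ H) :
    ContDiff ℝ ∞ (pdv v H) :=
  (hH.fderiv_right (by simp)).clm_apply contDiff_const

lemma diff_of_smooth {H : ℝ × ℝ × ℝ → ℝ} (hH : ContDiff ℝ ∞ H) : Differentiable ℝ H :=
  hH.differentiable (by simp)

lemma hasDerivAt_pdv1 {H : ℝ × ℝ × ℝ → ℝ} (hH : ContDiff ℝ ∞ H) (a b c : ℝ) :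
    HasDerivAt (fun x => H (x, b, c)) (D1 H (a,b,c)) a :=
  ((diff_of_smooth hH) (a,b,c)).hasFDerivAt.comp_hasDerivAt a
    ((hasDerivAt_id a).prodMk ((hasDerivAt_const a b).prodMk (hasDerivAt_const a c)))

lemma hasDerivAt_pdv2 {H : ℝ × ℝ × ℝ → ℝ} (hH : ContDiff ℝ ∞ H) (a b c : ℝ) :
    HasDerivAt (fun y => H (a, y, c)) (D2 H (a,b,c)) b :=
  ((diff_of_smooth hH) (a,b,c)).hasFDerivAt.comp_hasDerivAt b
    ((hasDerivAt_const b a).prodMk ((hasDerivAt_id b).prodMk (hasDerivAt_const b c)))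

lemma hasDerivAt_pdv3 {H : ℝ × ℝ × ℝ → ℝ} (hH : ContDiff ℝ ∞ H) (a b c : ℝ) :
    HasDerivAt (fun z => H (a, b, z)) (D3 H (a,b,c)) c :=
  ((diff_of_smooth hH) (a,b,c)).hasFDerivAt.comp_hasDerivAt c
    ((hasDerivAt_const c a).prodMk ((hasDerivAt_const c b).prodMk (hasDerivAt_id c)))

lemma pdv_comm {H : ℝ × ℝ × ℝ → ℝ} (hH : ContDiff ℝ ∞ H) (v w p : ℝ × ℝ × ℝ) :
    pdv v (pdv w H) p = pdv w (pdv v H) p := by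
  have hd : DifferentiableAt ℝ (fderiv ℝ H) p :=
    ((hH.fderiv_right (m := ∞) (by simp)).differentiable (by simp)) p
  have hsymm := (hH.contDiffAt (x := p)).isSymmSndFDerivAt (by rw [minSmoothness_of_isRCLikeNormedField]; exact_mod_cast coe_le_infty 2)
  have key : ∀ u : ℝ × ℝ × ℝ, fderiv ℝ (fun q => fderiv ℝ H q u) p
      = (fderiv ℝ (fderiv ℝ H) p).flip u := by
    intro u
    rw [fderiv_clm_apply hd (differentiableAt_const u)]
    simp
  show (fderiv ℝ (fun q => fderiv ℝ H q w) p) v = (fderiv ℝ (fun q => fderiv ℝ H q v) p) w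
  rw [key w, key v]
  exact hsymm v w

/-- Partial derivative in `a`. -/
noncomputable def Pa (F : ℝ → ℝ → ℝ → ℝ) (a b c : ℝ) : ℝ :=
  deriv (fun x => F x b c) a

/-- Partial derivative in `b`. -/
noncomputable def Pb (F : ℝ → ℝ → ℝ → ℝ) (a b c : ℝ) : ℝ :=
  deriv (fun y => F a y c) b

/-- Partial derivative in `c`. -/
noncomputable def Pc (F : ℝ → ℝ → ℝ → ℝ) (a b c : ℝ) : ℝ :=
  deriv (fun z => F a b z) c

/-- `𝒜₁ = (1/(c²−1))(∂_a + c ∂_b)`. -/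
noncomputable def opA1 (F : ℝ → ℝ → ℝ → ℝ) (a b c : ℝ) : ℝ :=
  (1 / (c ^ 2 - 1)) * (Pa F a b c + c * Pb F a b c)

/-- `ℬ₁ = (1/(1−c²))(c ∂_a + ∂_b)`. -/
noncomputable def opB1 (F : ℝ → ℝ → ℝ → ℝ) (a b c : ℝ) : ℝ :=
  (1 / (1 - c ^ 2)) * (c * Pa F a b c + Pb F a b c)

/-- `𝒜₂ = a ∂_a − c ∂_c`. -/
noncomputable def opA2 (F : ℝ → ℝ → ℝ → ℝ) (a b c : ℝ) : ℝ :=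
  a * Pa F a b c - c * Pc F a b c

/-- `ℬ₂ = b ∂_b − c ∂_c`. -/
noncomputable def opB2 (F : ℝ → ℝ → ℝ → ℝ) (a b c : ℝ) : ℝ :=
  b * Pb F a b c - c * Pc F a b c

/-- the commutation relations of the operators 𝒜₁, ℬ₁, 𝒜₂, ℬ₂
on smooth functions of `(a,b,c)`, at points where `c² ≠ 1`. -/
theorem coupled_operators_lie_algebra
    (F : ℝ → ℝ → ℝ → ℝ)
    (hF : ContDiff ℝ (⊤ : ℕ∞) (fun p : ℝ × ℝ × ℝ => F p.1 p.2.1 p.2.2))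
    (a b c : ℝ) (hc : c ^ 2 ≠ 1) :
    opA1 (opB1 F) a b c - opB1 (opA1 F) a b c = 0 ∧
    opA1 (opA2 F) a b c - opA2 (opA1 F) a b c
      = ((1 + c ^ 2) / (1 - c ^ 2)) * opA1 F a b c ∧
    opA2 (opB1 F) a b c - opB1 (opA2 F) a b c
      = (2 * c / (1 - c ^ 2)) * opA1 F a b c ∧
    opA2 (opB2 F) a b c - opB2 (opA2 F) a b c = 0 ∧
    opA1 (opB2 F) a b c - opB2 (opA1 F) a b c
      = (-(2 * c) / (1 - c ^ 2)) * opB1 F a b c ∧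
    opB1 (opB2 F) a b c - opB2 (opB1 F) a b c
      = ((1 + c ^ 2) / (1 - c ^ 2)) * opB1 F a b c := by
  set G : ℝ × ℝ × ℝ → ℝ := fun p => F p.1 p.2.1 p.2.2 with hGdef
  have hG : ContDiff ℝ ∞ G := hF.of_le (by simp)
  have hc1 : c ^ 2 - 1 ≠ 0 := sub_ne_zero.2 hc
  have hc2 : (1:ℝ) - c ^ 2 ≠ 0 := sub_ne_zero.2 (Ne.symm hc)
  have h1 := contDiff_pdv ((1:ℝ),(0:ℝ),(0:ℝ)) hG
  have h2 := contDiff_pdv ((0:ℝ),(1:ℝ),(0:ℝ)) hG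
  have h3 := contDiff_pdv ((0:ℝ),(0:ℝ),(1:ℝ)) hG
  have hPa : ∀ x y z, Pa F x y z = D1 G (x,y,z) := fun x y z =>
    (hasDerivAt_pdv1 hG x y z).deriv
  have hPb : ∀ x y z, Pb F x y z = D2 G (x,y,z) := fun x y z =>
    (hasDerivAt_pdv2 hG x y z).deriv
  have hPc : ∀ x y z, Pc F x y z = D3 G (x,y,z) := fun x y z =>
    (hasDerivAt_pdv3 hG x y z).deriv
  have eA1 : opA1 F = fun x y z => (1/(z^2-1)) * (D1 G (x,y,z) + z * D2 G (x,y,z)) := by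
    funext x y z; rw [opA1, hPa, hPb]
  have eB1 : opB1 F = fun x y z => (1/(1-z^2)) * (z * D1 G (x,y,z) + D2 G (x,y,z)) := by
    funext x y z; rw [opB1, hPa, hPb]
  have eA2 : opA2 F = fun x y z => x * D1 G (x,y,z) - z * D3 G (x,y,z) := by
    funext x y z; rw [opA2, hPa, hPc]
  have eB2 : opB2 F = fun x y z => y * D2 G (x,y,z) - z * D3 G (x,y,z) := by
    funext x y z; rw [opB2, hPb, hPc]
  -- coefficient derivatives
  have hsq : HasDerivAt (fun z : ℝ => z^2 - 1) (2*c) c := by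
    simpa using ((hasDerivAt_pow 2 c).sub_const 1)
  have hsq' : HasDerivAt (fun z : ℝ => 1 - z^2) (-(2*c)) c := by
    simpa using ((hasDerivAt_pow 2 c).const_sub 1)
  have hcoef : HasDerivAt (fun z : ℝ => 1/(z^2-1)) (-(2*c)/(c^2-1)^2) c := by
    simpa [one_div] using hsq.fun_inv hc1
  have hcoef2 : HasDerivAt (fun z : ℝ => 1/(1-z^2)) (2*c/(1-c^2)^2) c := by
    have := hsq'.fun_inv hc2
    rw [show -(-(2*c)) / ((1:ℝ)-c^2)^2 = 2*c/(1-c^2)^2 by ring] at this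
    simpa [one_div] using this
  -- the twelve partial derivatives of the four operators
  have PaA1 : Pa (opA1 F) a b c
      = (1/(c^2-1)) * (D1 (D1 G) (a,b,c) + c * D1 (D2 G) (a,b,c)) := by
    simp only [Pa, eA1]
    exact (((hasDerivAt_pdv1 h1 a b c).add
      ((hasDerivAt_pdv1 h2 a b c).const_mul c)).const_mul (1/(c^2-1))).deriv
  have PbA1 : Pb (opA1 F) a b c
      = (1/(c^2-1)) * (D2 (D1 G) (a,b,c) + c * D2 (D2 G) (a,b,c)) := by
    simp only [Pb, eA1]
    exact (((hasDerivAt_pdv2 h1 a b c).add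
      ((hasDerivAt_pdv2 h2 a b c).const_mul c)).const_mul (1/(c^2-1))).deriv
  have PcA1 : Pc (opA1 F) a b c
      = (-(2*c)/(c^2-1)^2) * (D1 G (a,b,c) + c * D2 G (a,b,c))
        + (1/(c^2-1)) * (D3 (D1 G) (a,b,c)
            + (1 * D2 G (a,b,c) + c * D3 (D2 G) (a,b,c))) := by
    simp only [Pc, eA1]
    exact (hcoef.mul ((hasDerivAt_pdv3 h1 a b c).add
      ((hasDerivAt_id c).mul (hasDerivAt_pdv3 h2 a b c)))).deriv
  have PaB1 : Pa (opB1 F) a b c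
      = (1/(1-c^2)) * (c * D1 (D1 G) (a,b,c) + D1 (D2 G) (a,b,c)) := by
    simp only [Pa, eB1]
    exact ((((hasDerivAt_pdv1 h1 a b c).const_mul c).add
      (hasDerivAt_pdv1 h2 a b c)).const_mul (1/(1-c^2))).deriv
  have PbB1 : Pb (opB1 F) a b c
      = (1/(1-c^2)) * (c * D2 (D1 G) (a,b,c) + D2 (D2 G) (a,b,c)) := by
    simp only [Pb, eB1]
    exact ((((hasDerivAt_pdv2 h1 a b c).const_mul c).add
      (hasDerivAt_pdv2 h2 a b c)).const_mul (1/(1-c^2))).deriv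
  have PcB1 : Pc (opB1 F) a b c
      = (2*c/(1-c^2)^2) * (c * D1 G (a,b,c) + D2 G (a,b,c))
        + (1/(1-c^2)) * ((1 * D1 G (a,b,c) + c * D3 (D1 G) (a,b,c))
            + D3 (D2 G) (a,b,c)) := by
    simp only [Pc, eB1]
    exact (hcoef2.mul (((hasDerivAt_id c).mul (hasDerivAt_pdv3 h1 a b c)).add
      (hasDerivAt_pdv3 h2 a b c))).deriv
  have PaA2 : Pa (opA2 F) a b c
      = (1 * D1 G (a,b,c) + a * D1 (D1 G) (a,b,c)) - c * D1 (D3 G) (a,b,c) := by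
    simp only [Pa, eA2]
    exact (((hasDerivAt_id a).mul (hasDerivAt_pdv1 h1 a b c)).sub
      ((hasDerivAt_pdv1 h3 a b c).const_mul c)).deriv
  have PbA2 : Pb (opA2 F) a b c
      = a * D2 (D1 G) (a,b,c) - c * D2 (D3 G) (a,b,c) := by
    simp only [Pb, eA2]
    exact (((hasDerivAt_pdv2 h1 a b c).const_mul a).sub
      ((hasDerivAt_pdv2 h3 a b c).const_mul c)).deriv
  have PcA2 : Pc (opA2 F) a b c
      = a * D3 (D1 G) (a,b,c) - (1 * D3 G (a,b,c) + c * D3 (D3 G) (a,b,c)) := by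
    simp only [Pc, eA2]
    exact (((hasDerivAt_pdv3 h1 a b c).const_mul a).sub
      ((hasDerivAt_id c).mul (hasDerivAt_pdv3 h3 a b c))).deriv
  have PaB2 : Pa (opB2 F) a b c
      = b * D1 (D2 G) (a,b,c) - c * D1 (D3 G) (a,b,c) := by
    simp only [Pa, eB2]
    exact (((hasDerivAt_pdv1 h2 a b c).const_mul b).sub
      ((hasDerivAt_pdv1 h3 a b c).const_mul c)).deriv
  have PbB2 : Pb (opB2 F) a b c
      = (1 * D2 G (a,b,c) + b * D2 (D2 G) (a,b,c)) - c * D2 (D3 G) (a,b,c) := by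
    simp only [Pb, eB2]
    exact (((hasDerivAt_id b).mul (hasDerivAt_pdv2 h2 a b c)).sub
      ((hasDerivAt_pdv2 h3 a b c).const_mul c)).deriv
  have PcB2 : Pc (opB2 F) a b c
      = b * D3 (D2 G) (a,b,c) - (1 * D3 G (a,b,c) + c * D3 (D3 G) (a,b,c)) := by
    simp only [Pc, eB2]
    exact (((hasDerivAt_pdv3 h2 a b c).const_mul b).sub
      ((hasDerivAt_id c).mul (hasDerivAt_pdv3 h3 a b c))).deriv
  -- symmetry of second derivatives
  have s21 : D2 (D1 G) (a,b,c) = D1 (D2 G) (a,b,c) := pdv_comm hG _ _ _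
  have s31 : D3 (D1 G) (a,b,c) = D1 (D3 G) (a,b,c) := pdv_comm hG _ _ _
  have s32 : D3 (D2 G) (a,b,c) = D2 (D3 G) (a,b,c) := pdv_comm hG _ _ _
  refine ⟨?_, ?_, ?_, ?_, ?_, ?_⟩
  · simp only [opA1, opB1]
    rw [PaB1, PbB1, PaA1, PbA1, s21]
    field_simp
    ring
  · simp only [opA1, opA2]
    rw [PaA2, PbA2, PaA1, PcA1, hPa, hPb, s21, s31, s32]
    field_simp
    ring
  · simp only [opA1, opA2, opB1]
    rw [PaB1, PcB1, PaA2, PbA2, hPa, hPb, s21, s31, s32]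
    field_simp
    ring
  · simp only [opA2, opB2]
    rw [PaB2, PcB2, PbA2, PcA2, s21, s31, s32]
    field_simp
    ring
  · simp only [opA1, opB1, opB2]
    rw [PaB2, PbB2, PbA1, PcA1, hPa, hPb, s21, s31, s32]
    field_simp
    ring
  · simp only [opB1, opB2]
    rw [PaB2, PbB2, PbB1, PcB1, hPa, hPb, s21, s31, s32]
    field_simp
    ring
end
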